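/- Let L : ℝ^n → ℝ be differentiable with β-Lipschitz gradient, and let g₁, …, g_k ∈ ℝ^n be sample gradients. Fix θ and η > 0, and let Δᵢ = L(θ) - L(θ - η•gᵢ) and sᵢ = ⟨∇L(θ), gᵢ⟩. If ‖gᵢ‖ ≤ B for all i and the pairwise score margins satisfy |sᵢ - sⱼ| ≥ γ > β η B² for all i ≠ j, then the permutation sorting (Δᵢ) in decreasing order equals the permutation sorting (sᵢ) in decreasing order. -/

import Mathlib

/-!
By the descent lemma, each one-step utility `L θ - L (θ - η • gᵢ)` lies within `β η² B² / 2` of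
`η sᵢ`. Distinct scores are `γ` apart, so the scaled scores are `η γ > β η² B²` apart, more than
twice the error: hence `Δᵢ ≤ Δⱼ ↔ sᵢ ≤ sⱼ` for all `i, j`, and an arrangement is decreasing in one
family exactly when it is decreasing in the other.
-/

open scoped RealInnerProductSpace

section Smooth

variable {E : Type*} [NormedAddCommGroup E] [InnerProductSpace ℝ E] [CompleteSpace E]
  {f : E → ℝ} {β : ℝ}

theorem hasDerivAt_comp_add_smul_of_differentiable (hf : Differentiable ℝ f) (x v : E) (t : ℝ) :
    HasDerivAt (fun t : ℝ => f (x + t • v)) ⟪gradient f (x + t • v), v⟫ t := by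
  have hline : HasDerivAt (fun t : ℝ => x + t • v) v t := by
    simpa using ((hasDerivAt_id t).smul_const v).const_add x
  have h :=
    (hasGradientAt_iff_hasFDerivAt.mp (hf (x + t • v)).hasGradientAt).comp_hasDerivAt t hline
  rwa [InnerProductSpace.toDual_apply_apply] at h

theorem abs_sub_sub_inner_gradient_le (hf : Differentiable ℝ f)
    (hlip : ∀ x y, ‖gradient f x - gradient f y‖ ≤ β * ‖x - y‖) (x v : E) :
    |f (x + v) - f x - ⟪gradient f x, v⟫| ≤ β / 2 * ‖v‖ ^ 2 := by
  have hφ : ∀ t, HasDerivAt (fun t : ℝ => f (x + t • v) - f x - t * ⟪gradient f x, v⟫)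
      ⟪gradient f (x + t • v) - gradient f x, v⟫ t := fun t => by
    rw [inner_sub_left]
    exact ((hasDerivAt_comp_add_smul_of_differentiable hf x v t).sub_const (f x)).sub
      (by simpa using (hasDerivAt_id t).mul_const ⟪gradient f x, v⟫)
  have hbound : ∀ t ∈ Set.Ico (0 : ℝ) 1,
      ‖⟪gradient f (x + t • v) - gradient f x, v⟫‖ ≤ β * ‖v‖ ^ 2 * t := fun t ht => by
    calc ‖⟪gradient f (x + t • v) - gradient f x, v⟫‖
        ≤ ‖gradient f (x + t • v) - gradient f x‖ * ‖v‖ := norm_inner_le_norm _ _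
      _ ≤ β * ‖t • v‖ * ‖v‖ := by gcongr; simpa using hlip (x + t • v) x
      _ = β * ‖v‖ ^ 2 * t := by rw [norm_smul, Real.norm_of_nonneg ht.1]; ring
  have hB : ∀ t, HasDerivAt (fun t : ℝ => β / 2 * ‖v‖ ^ 2 * t ^ 2) (β * ‖v‖ ^ 2 * t) t :=
    fun t => ((hasDerivAt_pow 2 t).const_mul (β / 2 * ‖v‖ ^ 2)).congr_deriv (by push_cast; ring)
  simpa using image_norm_le_of_norm_deriv_right_le_deriv_boundary
    (fun t _ => (hφ t).continuousAt.continuousWithinAt) (fun t _ => (hφ t).hasDerivWithinAt)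
    (by simp) hB hbound (Set.right_mem_Icc.mpr zero_le_one)

theorem abs_sub_sub_smul_inner_gradient_le (hf : Differentiable ℝ f)
    (hlip : ∀ x y, ‖gradient f x - gradient f y‖ ≤ β * ‖x - y‖) (x g : E) (η : ℝ) :
    |f x - f (x - η • g) - η * ⟪gradient f x, g⟫| ≤ β / 2 * (η * ‖g‖) ^ 2 := by
  have := abs_sub_sub_inner_gradient_le hf hlip x (-(η • g))
  rw [← sub_eq_add_neg, inner_neg_right, real_inner_smul_right, norm_neg, norm_smul,
    Real.norm_eq_abs, mul_pow, sq_abs, ← mul_pow] at this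
  rw [← abs_neg]
  convert this using 2
  ring

end Smooth

section Margin

variable {ι : Type*} {Δ s : ι → ℝ} {c ε γ : ℝ}

theorem lt_of_abs_sub_mul_le_of_add_le (hc : 0 ≤ c) (hεγ : 2 * ε < c * γ)
    (hΔ : ∀ i, |Δ i - c * s i| ≤ ε) {i j : ι} (hij : s i + γ ≤ s j) : Δ i < Δ j := by
  have hgap : c * γ ≤ c * s j - c * s i := by
    rw [← mul_sub]; exact mul_le_mul_of_nonneg_left (by linarith) hc
  linarith [(abs_le.mp (hΔ i)).2, (abs_le.mp (hΔ j)).1]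

theorem le_iff_le_of_abs_sub_mul_le_of_margin (hc : 0 ≤ c) (hεγ : 2 * ε < c * γ)
    (hΔ : ∀ i, |Δ i - c * s i| ≤ ε) (hmargin : ∀ i j, i ≠ j → γ ≤ |s i - s j|) (i j : ι) :
    Δ i ≤ Δ j ↔ s i ≤ s j := by
  have hstrict : ∀ i j, i ≠ j → s i ≤ s j → Δ i < Δ j := fun i j hne hle => by
    have hgap := hmargin i j hne
    rw [abs_sub_comm, abs_of_nonneg (sub_nonneg.mpr hle)] at hgap
    exact lt_of_abs_sub_mul_le_of_add_le hc hεγ hΔ (by linarith)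
  refine ⟨fun h => not_lt.mp fun hlt => (hstrict j i (ne_of_apply_ne s hlt.ne) hlt.le).not_ge h,
    fun h => ?_⟩
  obtain rfl | hne := eq_or_ne i j
  exacts [le_rfl, (hstrict i j hne h).le]

end Margin

theorem ost_topk_consistency_general {n k : ℕ} (L : EuclideanSpace ℝ (Fin n) → ℝ) (β : ℝ)
    (hβ : 0 < β)
    (hdiff : Differentiable ℝ L)
    (hlip : ∀ x y, ‖gradient L x - gradient L y‖ ≤ β * ‖x - y‖)
    (θ : EuclideanSpace ℝ (Fin n)) (g : Fin k → EuclideanSpace ℝ (Fin n))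
    (η B γ : ℝ) (hη : 0 < η) (hB : ∀ i, ‖g i‖ ≤ B)
    (hγB : β * η * B ^ 2 < γ)
    (hmargin : ∀ i j, i ≠ j →
      γ ≤ |⟪gradient L θ, g i⟫ - ⟪gradient L θ, g j⟫|) :
    ∀ σ : Equiv.Perm (Fin k),
      Antitone (fun i => L θ - L (θ - η • g (σ i))) ↔
      Antitone (fun i => ⟪gradient L θ, g (σ i)⟫) := by
  have hΔ : ∀ i, |L θ - L (θ - η • g i) - η * ⟪gradient L θ, g i⟫| ≤ β / 2 * (η * B) ^ 2 :=
    fun i => (abs_sub_sub_smul_inner_gradient_le hdiff hlip θ (g i) η).trans <| by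
      gcongr
      exact hB i
  have hεγ : 2 * (β / 2 * (η * B) ^ 2) < η * γ :=
    calc 2 * (β / 2 * (η * B) ^ 2) = η * (β * η * B ^ 2) := by ring
      _ < η * γ := mul_lt_mul_of_pos_left hγB hη
  have hle := le_iff_le_of_abs_sub_mul_le_of_margin hη.le hεγ hΔ hmargin
  exact fun σ => forall₂_congr fun i j => imp_congr_right fun _ => hle (σ j) (σ i)

theorem ost_topk_consistency {n k : ℕ} (L : EuclideanSpace ℝ (Fin n) → ℝ) (β : ℝ)
    (hβ : 0 < β)
    (hdiff : Differentiable ℝ L)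
    (hlip : ∀ x y, ‖gradient L x - gradient L y‖ ≤ β * ‖x - y‖)
    (θ : EuclideanSpace ℝ (Fin n)) (g : Fin k → EuclideanSpace ℝ (Fin n))
    (η B γ : ℝ) (hη : 0 < η) (hB : ∀ i, ‖g i‖ ≤ B)
    (hγ : 0 < γ) (hγB : β * η * B ^ 2 < γ)
    (hmargin : ∀ i j, i ≠ j →
      γ ≤ |⟪gradient L θ, g i⟫ - ⟪gradient L θ, g j⟫|) :
    ∀ σ : Equiv.Perm (Fin k),
      Antitone (fun i => L θ - L (θ - η • g (σ i))) ↔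
      Antitone (fun i => ⟪gradient L θ, g (σ i)⟫) :=
  ost_topk_consistency_general L β hβ hdiff hlip θ g η B γ hη hB hγB hmargin
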